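/- arXiv:0802.0446 — 2 statements merged into one kernel-verified Lean document; each statement's English description precedes it below -/
import Mathlib

section
/- Let V ∈ L¹(ℝ³) be real-valued and let u ∈ L²(Ω_μ) where Ω_μ is the sphere of radius √μ in ℝ³. Define φ̂(p) = (2π)^{−3/2} ∫_{Ω_μ} V̂(p−q) u(q) dω(q). Then the spherical average r ↦ ∫_{S²} |φ̂(rω)|² dΩ(ω) is Lipschitz continuous in r on [0, ∞). -/
/-!
`V̂` is bounded by `(2π)^{-3/2} ‖V‖₁` and, since `|e^{-ia} - e^{-ib}| ≤ |a - b|`, Lipschitz with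
constant `(2π)^{-3/2} ‖|x| V‖₁`. The sphere `Ω_μ` has finite `μH[2]`-measure (it is a locally
Lipschitz image of a rectangle under spherical coordinates), so `u ∈ L²(Ω_μ) ⊆ L¹(Ω_μ)` and
integrating `V̂(p - q) u(q)` over `Ω_μ` keeps both properties: `φ̂` is bounded and Lipschitz, hence
so is `|φ̂|²`. Since `|r ω - s ω| = |r - s|` on the unit sphere, which also has finite measure,
integrating over it gives the Lipschitz bound for the spherical average.
-/

open MeasureTheory Real

noncomputable section

/-- The Fourier transform with the convention `V̂(p) = (2π)^{-3/2} ∫ V(x) e^{-i p·x} dx`. -/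
def paperFT (V : EuclideanSpace ℝ (Fin 3) → ℝ) (p : EuclideanSpace ℝ (Fin 3)) : ℂ :=
  (((2 * π) ^ (-(3 : ℝ) / 2) : ℝ) : ℂ) *
    ∫ x, Complex.exp (-Complex.I * ((inner ℝ x p : ℝ) : ℂ)) * (V x : ℂ)

open Metric Set

local notation "ℝ³" => EuclideanSpace ℝ (Fin 3)

theorem norm_cexp_neg_I_mul (a : ℝ) : ‖Complex.exp (-Complex.I * a)‖ = 1 := by
  simpa using Complex.norm_exp_I_mul_ofReal (-a)

theorem norm_cexp_neg_I_mul_sub_le (a b : ℝ) :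
    ‖Complex.exp (-Complex.I * a) - Complex.exp (-Complex.I * b)‖ ≤ |a - b| := by
  have hfactor : Complex.exp (-Complex.I * a) - Complex.exp (-Complex.I * b)
      = Complex.exp (-Complex.I * b) * (Complex.exp (Complex.I * ↑(b - a)) - 1) := by
    rw [mul_sub, mul_one, ← Complex.exp_add]; push_cast; ring_nf
  rw [hfactor, norm_mul, norm_cexp_neg_I_mul, one_mul, abs_sub_comm]
  exact Real.norm_exp_I_mul_ofReal_sub_one_le

section FourierTransform

variable {V : ℝ³ → ℝ}

theorem integrable_cexp_neg_I_inner_mul (hV : Integrable V) (p : ℝ³) :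
    Integrable fun x => Complex.exp (-Complex.I * (inner ℝ x p : ℝ)) * (V x : ℂ) :=
  hV.ofReal.bdd_mul (by fun_prop : Continuous _).aestronglyMeasurable
    (ae_of_all _ fun _ => (norm_cexp_neg_I_mul _).le)

theorem norm_paperFT_le (V : ℝ³ → ℝ) (p : ℝ³) :
    ‖paperFT V p‖ ≤ (2 * π) ^ (-(3 : ℝ) / 2) * ∫ x, |V x| := by
  rw [paperFT, norm_mul, Complex.norm_real, Real.norm_of_nonneg (by positivity)]
  gcongr
  refine (norm_integral_le_integral_norm _).trans_eq (integral_congr_ae (ae_of_all _ fun x => ?_))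
  dsimp only
  rw [norm_mul, norm_cexp_neg_I_mul, one_mul, Complex.norm_real, Real.norm_eq_abs]

theorem lipschitzWith_paperFT (hV : Integrable V) (hxV : Integrable fun x => ‖x‖ * V x) :
    LipschitzWith (Real.toNNReal ((2 * π) ^ (-(3 : ℝ) / 2) * ∫ x, ‖x‖ * |V x|)) (paperFT V) := by
  refine LipschitzWith.of_dist_le' fun p p' => ?_
  have hxV' : Integrable fun x => ‖x‖ * |V x| := by simpa [norm_mul] using hxV.norm
  have hpointwise : ∀ x, ‖Complex.exp (-Complex.I * (inner ℝ x p : ℝ)) * (V x : ℂ)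
      - Complex.exp (-Complex.I * (inner ℝ x p' : ℝ)) * (V x : ℂ)‖ ≤ ‖p - p'‖ * (‖x‖ * |V x|) := by
    intro x
    rw [← sub_mul, norm_mul, Complex.norm_real, Real.norm_eq_abs]
    calc _ ≤ |inner ℝ x p - inner ℝ x p'| * |V x| := by gcongr; exact norm_cexp_neg_I_mul_sub_le _ _
      _ ≤ ‖x‖ * ‖p - p'‖ * |V x| := by
          gcongr; rw [← inner_sub_right]; exact abs_real_inner_le_norm _ _
      _ = _ := by ring
  rw [dist_eq_norm, dist_eq_norm, paperFT, paperFT, ← mul_sub,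
    ← integral_sub (integrable_cexp_neg_I_inner_mul hV p) (integrable_cexp_neg_I_inner_mul hV p'),
    norm_mul, Complex.norm_real, Real.norm_of_nonneg (by positivity), mul_assoc]
  gcongr
  calc _ ≤ ∫ x, ‖p - p'‖ * (‖x‖ * |V x|) :=
        norm_integral_le_of_norm_le (hxV'.const_mul _) (ae_of_all _ hpointwise)
    _ = _ := by rw [integral_const_mul]; ring

end FourierTransform

section Convolution

variable {𝕜 E : Type*} [RCLike 𝕜] [NormedAddCommGroup E] [MeasurableSpace E]
  {ν : Measure E} {K u : E → 𝕜} {B : ℝ}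

theorem norm_integral_comp_sub_mul_le (hKB : ∀ p, ‖K p‖ ≤ B) (hu : Integrable u ν) (p : E) :
    ‖∫ q, K (p - q) * u q ∂ν‖ ≤ B * ∫ q, ‖u q‖ ∂ν := by
  rw [← integral_const_mul]
  refine norm_integral_le_of_norm_le (hu.norm.const_mul B) (ae_of_all _ fun q => ?_)
  rw [norm_mul]
  gcongr
  exact hKB _

variable [OpensMeasurableSpace E]

theorem integrable_comp_sub_mul (hK : Continuous K) (hKB : ∀ p, ‖K p‖ ≤ B) (hu : Integrable u ν)
    (p : E) : Integrable (fun q => K (p - q) * u q) ν :=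
  hu.bdd_mul (hK.comp (continuous_const.sub continuous_id)).aestronglyMeasurable
    (ae_of_all _ fun _ => hKB _)

theorem lipschitzWith_integral_comp_sub_mul {L : NNReal} (hK : LipschitzWith L K)
    (hKB : ∀ p, ‖K p‖ ≤ B) (hu : Integrable u ν) :
    LipschitzWith (Real.toNNReal (L * ∫ q, ‖u q‖ ∂ν)) fun p => ∫ q, K (p - q) * u q ∂ν := by
  refine LipschitzWith.of_dist_le' fun p p' => ?_
  have hint := integrable_comp_sub_mul hK.continuous hKB hu
  rw [dist_eq_norm, dist_eq_norm, ← integral_sub (hint p) (hint p')]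
  calc _ ≤ ∫ q, L * ‖p - p'‖ * ‖u q‖ ∂ν :=
        norm_integral_le_of_norm_le (hu.norm.const_mul _) (ae_of_all _ fun q => ?_)
    _ = _ := by rw [integral_const_mul]; ring
  rw [← sub_mul, norm_mul, ← dist_eq_norm, ← dist_eq_norm, ← dist_sub_right p p' q]
  gcongr
  exact hK.dist_le_mul _ _

end Convolution

theorem LipschitzWith.norm_sq {α F : Type*} [PseudoMetricSpace α] [SeminormedAddCommGroup F]
    {f : α → F} {L : NNReal} {B : ℝ} (hf : LipschitzWith L f) (hB : ∀ x, ‖f x‖ ≤ B) :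
    LipschitzWith (Real.toNNReal (2 * B * L)) fun x => ‖f x‖ ^ 2 := by
  refine LipschitzWith.of_dist_le' fun x y => ?_
  have hB0 : 0 ≤ B := (norm_nonneg _).trans (hB x)
  rw [Real.dist_eq, sq_sub_sq, abs_mul, abs_of_nonneg (by positivity)]
  calc _ ≤ 2 * B * (L * dist x y) := by
        gcongr
        · linarith [hB x, hB y]
        · exact (abs_norm_sub_norm_le _ _).trans (dist_eq_norm (f x) (f y) ▸ hf.dist_le_mul x y)
    _ = _ := by ring

theorem lipschitzWith_integral_comp_smul {E : Type*} [NormedAddCommGroup E] [NormedSpace ℝ E]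
    [MeasurableSpace E] [OpensMeasurableSpace E] {ν : Measure E} [IsFiniteMeasure ν]
    {G : E → ℝ} {K : NNReal} (hG : LipschitzWith K G) (hν : ∀ᵐ ω ∂ν, ‖ω‖ ≤ 1) :
    LipschitzWith (K * (ν univ).toNNReal) fun r : ℝ => ∫ ω, G (r • ω) ∂ν := by
  have hdist : ∀ r s : ℝ, ∀ᵐ ω ∂ν, ‖G (r • ω) - G (s • ω)‖ ≤ K * dist r s := fun r s =>
    hν.mono fun ω hω => by
      rw [← dist_eq_norm]
      refine (hG.dist_le_mul _ _).trans ?_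
      rw [dist_eq_norm, ← sub_smul, norm_smul, ← dist_eq_norm]
      gcongr
      exact mul_le_of_le_one_right dist_nonneg hω
  have hint : ∀ r : ℝ, Integrable (fun ω => G (r • ω)) ν := fun r =>
    Integrable.of_bound (hG.continuous.comp (continuous_const_smul r)).aestronglyMeasurable
      (‖G 0‖ + K * dist r 0) ((hdist r 0).mono fun ω hω => by
        rw [zero_smul] at hω
        exact (norm_le_norm_add_norm_sub' _ (G 0)).trans (by gcongr))
  refine LipschitzWith.of_dist_le_mul fun r s => ?_
  rw [dist_eq_norm, ← integral_sub (hint r) (hint s), NNReal.coe_mul,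
    ENNReal.coe_toNNReal_eq_toReal, mul_right_comm]
  exact norm_integral_le_of_norm_le_const (hdist r s)

theorem hausdorffMeasure_image_lt_top_of_locallyLipschitz {X Y : Type*} [MetricSpace X]
    [MetricSpace Y] [MeasurableSpace X] [BorelSpace X] [MeasurableSpace Y] [BorelSpace Y]
    {f : X → Y} (hf : LocallyLipschitz f) {s : Set X} (hs : IsCompact s) {d : ℝ} (hd : 0 ≤ d)
    (hfin : μH[d] s < ⊤) : μH[d] (f '' s) < ⊤ := by
  obtain ⟨K, hK⟩ := hf.locallyLipschitzOn.exists_lipschitzOnWith_of_compact hs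
  exact (hK.hausdorffMeasure_image_le hd).trans_lt
    (ENNReal.mul_lt_top (ENNReal.rpow_lt_top_of_nonneg hd ENNReal.coe_ne_top) hfin)

def sphericalCoords (p : ℝ × ℝ) : ℝ³ := !₂[sin p.1 * cos p.2, sin p.1 * sin p.2, cos p.1]

theorem contDiff_sphericalCoords : ContDiff ℝ 1 sphericalCoords := by
  refine contDiff_piLp' _ fun i => ?_
  fin_cases i <;> simp [sphericalCoords] <;> fun_prop

theorem unitSphere_subset_image_sphericalCoords :
    sphere (0 : ℝ³) 1 ⊆ sphericalCoords '' (Icc 0 π ×ˢ Icc (-π) π) := by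
  intro v hv
  have hnorm : v 0 ^ 2 + v 1 ^ 2 + v 2 ^ 2 = 1 := by
    have := mem_sphere_zero_iff_norm.1 hv
    rw [EuclideanSpace.norm_eq, Real.sqrt_eq_one, Fin.sum_univ_three] at this
    simpa using this
  set z : ℂ := ⟨v 0, v 1⟩
  have hsin : sin (arccos (v 2)) = ‖z‖ := by
    rw [sin_arccos, Complex.norm_def, Complex.normSq_mk]
    congr 1
    linarith
  refine ⟨(arccos (v 2), z.arg), ⟨⟨arccos_nonneg _, arccos_le_pi _⟩,
    (Complex.neg_pi_lt_arg z).le, Complex.arg_le_pi z⟩, ?_⟩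
  ext i
  fin_cases i
  · simp [sphericalCoords, hsin, z]
  · simp [sphericalCoords, hsin, z]
  · have hv2 : v 2 ^ 2 ≤ 1 := by nlinarith
    simpa [sphericalCoords] using cos_arccos (by nlinarith) (by nlinarith)

theorem hausdorffMeasure_sphere_lt_top (R : ℝ) : μH[2] (sphere (0 : ℝ³) R) < ⊤ := by
  rcases lt_or_ge R 0 with hR | hR
  · simp [sphere_eq_empty_of_neg hR]
  have hsub : sphere (0 : ℝ³) R ⊆ (fun p => R • sphericalCoords p) '' (Icc 0 π ×ˢ Icc (-π) π) := by
    have hscale := smul_sphere R (0 : ℝ³) zero_le_one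
    rw [smul_zero, mul_one, Real.norm_of_nonneg hR] at hscale
    rw [← hscale]
    rintro _ ⟨v, hv, rfl⟩
    obtain ⟨p, hp, rfl⟩ := unitSphere_subset_image_sphericalCoords hv
    exact ⟨p, hp, rfl⟩
  have hK : IsCompact (Icc 0 π ×ˢ Icc (-π) π) := isCompact_Icc.prod isCompact_Icc
  have hLip : LocallyLipschitz fun p => R • sphericalCoords p :=
    (contDiff_sphericalCoords.const_smul R).locallyLipschitz
  have hfin : μH[2] (Icc 0 π ×ˢ Icc (-π) π) < ⊤ := by
    rw [hausdorffMeasure_prod_real]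
    exact hK.measure_lt_top
  exact (measure_mono hsub).trans_lt
    (hausdorffMeasure_image_lt_top_of_locallyLipschitz hLip hK zero_le_two hfin)

instance isFiniteMeasure_restrict_sphere (R : ℝ) :
    IsFiniteMeasure ((μH[2] : Measure ℝ³).restrict (sphere 0 R)) :=
  isFiniteMeasure_restrict.2 (hausdorffMeasure_sphere_lt_top R).ne

theorem stmt4_general (μ : ℝ)
    (V : EuclideanSpace ℝ (Fin 3) → ℝ)
    (hV : Integrable V)
    (hVx : Integrable (fun x => ‖x‖ * V x))
    (u : EuclideanSpace ℝ (Fin 3) → ℂ)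
    (hu : MemLp u 2 ((μH[2]).restrict (Metric.sphere (0 : EuclideanSpace ℝ (Fin 3)) (Real.sqrt μ)))) :
    ∃ L : NNReal, LipschitzOnWith L
      (fun r : ℝ => ∫ ω in Metric.sphere (0 : EuclideanSpace ℝ (Fin 3)) 1,
        ‖(((2 * π) ^ (-(3 : ℝ) / 2) : ℝ) : ℂ) *
          ∫ q in Metric.sphere (0 : EuclideanSpace ℝ (Fin 3)) (Real.sqrt μ),
            paperFT V (r • ω - q) * u q ∂μH[2]‖ ^ 2 ∂μH[2])
      (Set.Ici (0 : ℝ)) := by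
  set c : ℂ := (((2 * π) ^ (-(3 : ℝ) / 2) : ℝ) : ℂ)
  have hu₁ := hu.integrable one_le_two
  have hφ_lip := (lipschitzWith_smul c).comp
    (lipschitzWith_integral_comp_sub_mul (lipschitzWith_paperFT hV hVx) (norm_paperFT_le V) hu₁)
  have hφ_bdd (p : ℝ³) : ‖c * ∫ q in sphere 0 √μ, paperFT V (p - q) * u q ∂μH[2]‖
      ≤ ‖c‖ * ((2 * π) ^ (-(3 : ℝ) / 2) * (∫ x, |V x|) * ∫ q in sphere 0 √μ, ‖u q‖ ∂μH[2]) := by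
    rw [norm_mul]
    gcongr
    exact norm_integral_comp_sub_mul_le (norm_paperFT_le V) hu₁ p
  have hω : ∀ᵐ ω ∂(μH[2] : Measure ℝ³).restrict (sphere 0 1), ‖ω‖ ≤ 1 :=
    (ae_restrict_mem isClosed_sphere.measurableSet).mono fun _ hω =>
      (mem_sphere_zero_iff_norm.1 hω).le
  exact ⟨_, (lipschitzWith_integral_comp_smul (hφ_lip.norm_sq hφ_bdd) hω).lipschitzOnWith⟩

/-- For `V` real-valued with `V, |x|V ∈ L¹(ℝ³)` and `u ∈ L²(Ω_μ)` on the sphere `Ω_μ` of radius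
`√μ`, define `φ̂(p) = (2π)^{-3/2} ∫_{Ω_μ} V̂(p-q) u(q) dω(q)`. Then the spherical average
`r ↦ ∫_{S²} |φ̂(r ω)|² dΩ(ω)` is Lipschitz continuous on `[0, ∞)`. -/
theorem stmt4 (μ : ℝ) (hμ : 0 < μ)
    (V : EuclideanSpace ℝ (Fin 3) → ℝ)
    (hV : Integrable V)
    (hVx : Integrable (fun x => ‖x‖ * V x))
    (u : EuclideanSpace ℝ (Fin 3) → ℂ)
    (hu : MemLp u 2 ((μH[2]).restrict (Metric.sphere (0 : EuclideanSpace ℝ (Fin 3)) (Real.sqrt μ)))) :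
    ∃ L : NNReal, LipschitzOnWith L
      (fun r : ℝ => ∫ ω in Metric.sphere (0 : EuclideanSpace ℝ (Fin 3)) 1,
        ‖(((2 * π) ^ (-(3 : ℝ) / 2) : ℝ) : ℂ) *
          ∫ q in Metric.sphere (0 : EuclideanSpace ℝ (Fin 3)) (Real.sqrt μ),
            paperFT V (r • ω - q) * u q ∂μH[2]‖ ^ 2 ∂μH[2])
      (Set.Ici (0 : ℝ)) :=
  stmt4_general μ V hV hVx u hu

end
end

section
/- Let γ, γ₀ : ℝ³ → (0,1) with γ₀(p) = (e^{(p²−μ)/T}+1)^{−1}, and suppose (p²−μ)/(½ − γ(p)) = 2E(p)/tanh(E(p)/(2T)) where E(p) = √((p²−μ)² + |Δ(p)|²) ≥ |p²−μ|. Then (p²−μ)/(½ − γ₀(p)) ≤ (p²−μ)/(½ − γ(p)) for all p, with strict inequality wherever Δ(p) ≠ 0. -/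
/-!
Both sides are values of `x ↦ x coth (x / 2T)`, which is even and strictly increasing on
`[0, ∞)`: for `u > 0` the derivative of `u coth u` has numerator `sinh u cosh u - u > 0`, and
`u coth u > 1`, its limit at `0`, because `tanh u < u`. As `|p² - μ| ≤ E(p)`, strictly when
`Δ(p) ≠ 0`, the comparison follows. The quotient formulas come from
`½ - (e^{2y} + 1)⁻¹ = tanh y / 2`.
-/

open Real Set

namespace Real

lemma tanh_ne_zero {x : ℝ} (hx : x ≠ 0) : tanh x ≠ 0 := by
  rw [tanh_eq_sinh_div_cosh]
  exact div_ne_zero (sinh_ne_zero.2 hx) (cosh_pos x).ne'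

lemma div_tanh_eq_mul_cosh_div_sinh (x : ℝ) : x / tanh x = x * cosh x / sinh x := by
  rw [tanh_eq_sinh_div_cosh, div_div_eq_mul_div]

lemma sinh_lt_mul_cosh {u : ℝ} (hu : 0 < u) : sinh u < u * cosh u := by
  have hmono : StrictMonoOn (fun x => x * cosh x - sinh x) (Ici 0) := by
    refine strictMonoOn_of_hasDerivWithinAt_pos (convex_Ici 0) (f' := fun x => x * sinh x)
      (by fun_prop) (fun x _ => ?_) (fun x hx => ?_)
    · have hd := ((hasDerivAt_id' x).mul (hasDerivAt_cosh x)).sub (hasDerivAt_sinh x)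
      exact (hd.congr_deriv (by ring)).hasDerivWithinAt
    · rw [interior_Ici] at hx
      exact mul_pos hx (sinh_pos_iff.2 hx)
  simpa using hmono self_mem_Ici hu.le hu

lemma one_lt_div_tanh {u : ℝ} (hu : 0 < u) : 1 < u / tanh u := by
  rw [div_tanh_eq_mul_cosh_div_sinh, one_lt_div (sinh_pos_iff.2 hu)]
  exact sinh_lt_mul_cosh hu

lemma strictMonoOn_div_tanh : StrictMonoOn (fun u => u / tanh u) (Ioi 0) := by
  simp_rw [div_tanh_eq_mul_cosh_div_sinh]
  refine strictMonoOn_of_hasDerivWithinAt_pos (convex_Ioi 0)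
    (f' := fun x => (sinh x * cosh x - x) / sinh x ^ 2)
    (fun x hx => ?_) (fun x hx => ?_) (fun x hx => ?_)
  · exact ((continuous_id.mul continuous_cosh).continuousAt.div continuous_sinh.continuousAt
      (sinh_pos_iff.2 hx).ne').continuousWithinAt
  · rw [interior_Ioi] at hx
    have hd := ((hasDerivAt_id' x).mul (hasDerivAt_cosh x)).div (hasDerivAt_sinh x)
      (sinh_pos_iff.2 hx).ne'
    refine (hd.congr_deriv ?_).hasDerivWithinAt
    simp only [Pi.mul_apply]
    congr 1
    linear_combination (-x) * cosh_sq_sub_sinh_sq x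
  · rw [interior_Ioi] at hx
    have hlt : 2 * x < 2 * (sinh x * cosh x) := by
      rw [← mul_assoc, ← sinh_two_mul]; exact self_lt_sinh_iff.2 (mul_pos two_pos hx)
    have hsinh : 0 < sinh x := sinh_pos_iff.2 hx
    apply div_pos <;> nlinarith

lemma one_half_sub_inv_exp_add_one (y : ℝ) : 1 / 2 - (exp (2 * y) + 1)⁻¹ = tanh y / 2 := by
  rw [tanh_eq, exp_neg, two_mul, exp_add]
  have hexp : 0 < exp y := exp_pos y
  field_simp
  ring

end Real

/-- `x ↦ x coth (x / c)`, extended continuously at `0`. -/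
noncomputable def mulCoth (c x : ℝ) : ℝ := if x = 0 then c else x / tanh (x / c)

lemma mulCoth_of_ne_zero {c x : ℝ} (hx : x ≠ 0) : mulCoth c x = x / tanh (x / c) := if_neg hx

lemma mulCoth_abs (c x : ℝ) : mulCoth c |x| = mulCoth c x := by
  rcases abs_cases x with ⟨h, _⟩ | ⟨h, _⟩
  · rw [h]
  · simp only [mulCoth, h, neg_eq_zero, neg_div, tanh_neg, div_neg, neg_neg]

lemma mulCoth_eq_mul_div_tanh {c x : ℝ} (hc : c ≠ 0) (hx : x ≠ 0) :
    mulCoth c x = c * (x / c / tanh (x / c)) := by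
  rw [mulCoth_of_ne_zero hx, mul_div_assoc', mul_div_cancel₀ x hc]

lemma strictMonoOn_mulCoth {c : ℝ} (hc : 0 < c) : StrictMonoOn (mulCoth c) (Ici 0) := by
  intro x hx y _ hxy
  have hy0 : y ≠ 0 := (hx.out.trans_lt hxy).ne'
  rw [mulCoth_eq_mul_div_tanh hc.ne' hy0]
  rcases hx.out.eq_or_lt with rfl | hx0
  · simpa [mulCoth] using mul_lt_mul_of_pos_left (one_lt_div_tanh (div_pos hxy hc)) hc
  · rw [mulCoth_eq_mul_div_tanh hc.ne' hx0.ne']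
    exact mul_lt_mul_of_pos_left (strictMonoOn_div_tanh (div_pos hx0 hc)
      (div_pos (hx0.trans hxy) hc) (div_lt_div_of_pos_right hxy hc)) hc

theorem stmt17_general (μ T : ℝ) (hT : 0 < T)
    (Δ : EuclideanSpace ℝ (Fin 3) → ℂ) (γ γ₀ : EuclideanSpace ℝ (Fin 3) → ℝ)
    (hγ₀ : ∀ p, γ₀ p = (Real.exp ((‖p‖ ^ 2 - μ) / T) + 1)⁻¹)
    (hγ : ∀ p, (1 / 2 - γ p) * (2 * Real.sqrt ((‖p‖ ^ 2 - μ) ^ 2 + ‖Δ p‖ ^ 2)) =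
      (‖p‖ ^ 2 - μ) * Real.tanh (Real.sqrt ((‖p‖ ^ 2 - μ) ^ 2 + ‖Δ p‖ ^ 2) / (2 * T))) :
    ∀ p : EuclideanSpace ℝ (Fin 3),
      ((if ‖p‖ ^ 2 - μ = 0 then 2 * T
        else (‖p‖ ^ 2 - μ) / Real.tanh ((‖p‖ ^ 2 - μ) / (2 * T))) ≤
       (if Real.sqrt ((‖p‖ ^ 2 - μ) ^ 2 + ‖Δ p‖ ^ 2) = 0 then 2 * T
        else Real.sqrt ((‖p‖ ^ 2 - μ) ^ 2 + ‖Δ p‖ ^ 2) /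
          Real.tanh (Real.sqrt ((‖p‖ ^ 2 - μ) ^ 2 + ‖Δ p‖ ^ 2) / (2 * T)))) ∧
      (Δ p ≠ 0 →
       (if ‖p‖ ^ 2 - μ = 0 then 2 * T
        else (‖p‖ ^ 2 - μ) / Real.tanh ((‖p‖ ^ 2 - μ) / (2 * T))) <
       (Real.sqrt ((‖p‖ ^ 2 - μ) ^ 2 + ‖Δ p‖ ^ 2) /
          Real.tanh (Real.sqrt ((‖p‖ ^ 2 - μ) ^ 2 + ‖Δ p‖ ^ 2) / (2 * T)))) ∧
      (‖p‖ ^ 2 ≠ μ →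
        (‖p‖ ^ 2 - μ) / (1 / 2 - γ₀ p) =
          2 * ((‖p‖ ^ 2 - μ) / Real.tanh ((‖p‖ ^ 2 - μ) / (2 * T))) ∧
        (‖p‖ ^ 2 - μ) / (1 / 2 - γ p) =
          2 * (Real.sqrt ((‖p‖ ^ 2 - μ) ^ 2 + ‖Δ p‖ ^ 2) /
            Real.tanh (Real.sqrt ((‖p‖ ^ 2 - μ) ^ 2 + ‖Δ p‖ ^ 2) / (2 * T)))) := by
  intro p
  have hγp := hγ p
  rw [hγ₀ p]
  set x := ‖p‖ ^ 2 - μ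
  set E := √(x ^ 2 + ‖Δ p‖ ^ 2)
  have h2T : 0 < 2 * T := by positivity
  have hmono := strictMonoOn_mulCoth h2T
  have hxE : |x| ≤ E := abs_le_sqrt (le_add_of_nonneg_right (sq_nonneg _))
  refine ⟨?_, fun hΔ => ?_, fun hμ => ?_⟩
  · show mulCoth (2 * T) x ≤ mulCoth (2 * T) E
    rw [← mulCoth_abs]
    exact hmono.monotoneOn (abs_nonneg x) (sqrt_nonneg _) hxE
  · have hxE' : |x| < E := (lt_sqrt (abs_nonneg x)).2 (by
      rw [sq_abs]; exact lt_add_of_pos_right _ (by positivity))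
    show mulCoth (2 * T) x < E / tanh (E / (2 * T))
    rw [← mulCoth_of_ne_zero ((abs_nonneg x).trans_lt hxE').ne', ← mulCoth_abs]
    exact hmono (abs_nonneg x) (abs_nonneg x |>.trans hxE) hxE'
  have hx : x ≠ 0 := sub_ne_zero.2 hμ
  constructor
  · rw [show x / T = 2 * (x / (2 * T)) by field_simp, one_half_sub_inv_exp_add_one]
    field_simp [tanh_ne_zero (div_ne_zero hx h2T.ne')]
  · have hE : 0 < E := (abs_pos.2 hx).trans_le hxE
    have hγE : 1 / 2 - γ p = x * tanh (E / (2 * T)) / (2 * E) := by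
      rw [eq_div_iff (by positivity)]; exact hγp
    rw [hγE]
    field_simp [tanh_ne_zero (div_ne_zero hE.ne' h2T.ne'), hx]

/-- Let `γ₀` be the Fermi–Dirac distribution and `γ` satisfy
`(p²-μ)/(½-γ(p)) = 2E(p)/tanh(E(p)/(2T))` (stated multiplicatively so as to be meaningful also
on the Fermi sphere), with `E(p) = √((p²-μ)² + |Δ(p)|²)`. Then
`(p²-μ)/(½-γ₀(p)) ≤ (p²-μ)/(½-γ(p))` for all `p`, with strict inequality wherever `Δ(p) ≠ 0`;
all quotients are interpreted via the coth formula `x ↦ x/tanh(x/(2T))` (value `2T` at `0`)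
at the Fermi sphere. -/
theorem stmt17 (μ T : ℝ) (hT : 0 < T)
    (Δ : EuclideanSpace ℝ (Fin 3) → ℂ) (γ γ₀ : EuclideanSpace ℝ (Fin 3) → ℝ)
    (hγ₀ : ∀ p, γ₀ p = (Real.exp ((‖p‖ ^ 2 - μ) / T) + 1)⁻¹)
    (hγr : ∀ p, γ p ∈ Set.Ioo (0 : ℝ) 1)
    (hγ : ∀ p, (1 / 2 - γ p) * (2 * Real.sqrt ((‖p‖ ^ 2 - μ) ^ 2 + ‖Δ p‖ ^ 2)) =
      (‖p‖ ^ 2 - μ) * Real.tanh (Real.sqrt ((‖p‖ ^ 2 - μ) ^ 2 + ‖Δ p‖ ^ 2) / (2 * T))) :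
    ∀ p : EuclideanSpace ℝ (Fin 3),
      ((if ‖p‖ ^ 2 - μ = 0 then 2 * T
        else (‖p‖ ^ 2 - μ) / Real.tanh ((‖p‖ ^ 2 - μ) / (2 * T))) ≤
       (if Real.sqrt ((‖p‖ ^ 2 - μ) ^ 2 + ‖Δ p‖ ^ 2) = 0 then 2 * T
        else Real.sqrt ((‖p‖ ^ 2 - μ) ^ 2 + ‖Δ p‖ ^ 2) /
          Real.tanh (Real.sqrt ((‖p‖ ^ 2 - μ) ^ 2 + ‖Δ p‖ ^ 2) / (2 * T)))) ∧
      (Δ p ≠ 0 →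
       (if ‖p‖ ^ 2 - μ = 0 then 2 * T
        else (‖p‖ ^ 2 - μ) / Real.tanh ((‖p‖ ^ 2 - μ) / (2 * T))) <
       (Real.sqrt ((‖p‖ ^ 2 - μ) ^ 2 + ‖Δ p‖ ^ 2) /
          Real.tanh (Real.sqrt ((‖p‖ ^ 2 - μ) ^ 2 + ‖Δ p‖ ^ 2) / (2 * T)))) ∧
      (‖p‖ ^ 2 ≠ μ →
        (‖p‖ ^ 2 - μ) / (1 / 2 - γ₀ p) =
          2 * ((‖p‖ ^ 2 - μ) / Real.tanh ((‖p‖ ^ 2 - μ) / (2 * T))) ∧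
        (‖p‖ ^ 2 - μ) / (1 / 2 - γ p) =
          2 * (Real.sqrt ((‖p‖ ^ 2 - μ) ^ 2 + ‖Δ p‖ ^ 2) /
            Real.tanh (Real.sqrt ((‖p‖ ^ 2 - μ) ^ 2 + ‖Δ p‖ ^ 2) / (2 * T)))) :=
  stmt17_general μ T hT Δ γ γ₀ hγ₀ hγ
end
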